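/- Let X be a real Banach space, let A: X ⇉ X* be a maximally monotone linear relation, let z belong to the norm closure of dom A, and let z* ∈ X* be such that (z, z*) ∉ gra A. Then for every ε > 0 there exists (a, a*) ∈ gra A with ‖a − z‖ < ε and ⟨z, a*⟩ + ⟨a, z*⟩ − ⟨a, a*⟩ > ⟨z, z*⟩ (equivalently, ⟨z − a, z* − a*⟩ < 0). -/

import Mathlib

open NormedSpace Set Pointwise

variable {X : Type*} [NormedAddCommGroup X] [NormedSpace ℝ X]

/-- The graph of a set-valued operator `A : X ⇉ X*`. -/
def gra (A : X → Set (StrongDual ℝ X)) : Set (X × StrongDual ℝ X) := {p | p.2 ∈ A p.1}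

/-- The domain of a set-valued operator. -/
def domOp (A : X → Set (StrongDual ℝ X)) : Set X := {x | (A x).Nonempty}

/-- `A` is a monotone operator. -/
def IsMonotoneOp (A : X → Set (StrongDual ℝ X)) : Prop :=
  ∀ p ∈ gra A, ∀ q ∈ gra A, 0 ≤ (p.2 - q.2) (p.1 - q.1)

/-- `A` is maximally monotone: it is monotone and has no proper monotone extension. -/
def IsMaxMonotoneOp (A : X → Set (StrongDual ℝ X)) : Prop :=
  IsMonotoneOp A ∧
    ∀ B : X → Set (StrongDual ℝ X), IsMonotoneOp B → gra A ⊆ gra B → gra B = gra A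

/-- `A` is a linear relation: its graph is a linear subspace of `X × X*`. -/
def IsLinearRelation (A : X → Set (StrongDual ℝ X)) : Prop :=
  ∃ S : Submodule ℝ (X × StrongDual ℝ X), (S : Set (X × StrongDual ℝ X)) = gra A

/-- The pointwise (Minkowski) sum of two set-valued operators. -/
def opSum (A B : X → Set (StrongDual ℝ X)) : X → Set (StrongDual ℝ X) := fun x => A x + B x

/-- Effective domain of an extended-real-valued function. -/
def fdom (f : X → EReal) : Set X := {x | f x ≠ ⊤}

/-- `f` is proper: not identically `+∞` and never `-∞`. -/
def EProper (f : X → EReal) : Prop := (∃ x, f x ≠ ⊤) ∧ ∀ x, f x ≠ ⊥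

/-- Convexity of an extended-real-valued function. -/
def EConvex (f : X → EReal) : Prop :=
  ∀ x y : X, ∀ t : ℝ, 0 ≤ t → t ≤ 1 →
    f (t • x + (1 - t) • y) ≤ (t : EReal) * f x + ((1 - t : ℝ) : EReal) * f y

/-- The subdifferential of `f`. -/
def subdiff (f : X → EReal) : X → Set (StrongDual ℝ X) :=
  fun x => {xs | ∀ y : X, ((xs (y - x) : ℝ) : EReal) + f x ≤ f y}

/-- The Fitzpatrick function of a set-valued operator. -/
noncomputable def fitz (A : X → Set (StrongDual ℝ X)) : X × StrongDual ℝ X → EReal :=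
  fun p => ⨆ q ∈ gra A, ((p.2 q.1 + q.2 p.1 - q.2 q.1 : ℝ) : EReal)

/-- `(x,x*)` is monotonically related to a set `G ⊆ X × X*`. -/
def MonRel (p : X × StrongDual ℝ X) (G : Set (X × StrongDual ℝ X)) : Prop :=
  ∀ q ∈ G, 0 ≤ (p.2 - q.2) (p.1 - q.1)

/-- A maximally monotone operator is of type (FPV). -/
def IsFPVOp (A : X → Set (StrongDual ℝ X)) : Prop :=
  IsMaxMonotoneOp A ∧
    ∀ U : Set X, IsOpen U → Convex ℝ U → (U ∩ domOp A).Nonempty →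
      ∀ p : X × StrongDual ℝ X, p.1 ∈ U →
        MonRel p (gra A ∩ U ×ˢ (univ : Set (StrongDual ℝ X))) → p ∈ gra A

/-- The normal cone operator of a set `C`. -/
def normalCone (C : Set X) : X → Set (StrongDual ℝ X) :=
  fun x => {xs | x ∈ C ∧ ∀ c ∈ C, xs (c - x) ≤ 0}

/-!
Suppose the conclusion fails for some `ε`, i.e. `(z, z*)` is monotonically related to every point
of `gra A` lying over the ball `B(z, ε)`. Since `A` is a monotone linear relation,
`p ↦ ⟨z - p.1, p.2⟩` is concave on `gra A`; on the ball its hypograph lies below the graph of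
`x ↦ ⟨z - x, z*⟩`, and separating the two yields `V` with `(z, V)` monotonically related to `gra A`,
hence `(z, V) ∈ gra A` by maximality. Along the segment from `(z, V)` to any `p ∈ gra A` the
quantity `⟨z - ·, z* - ·⟩` is `t α + t² β` with `β ≥ 0`; it is nonnegative for small `|t|`, which
forces `α = 0`, so its value `β` at `t = 1` is nonnegative. Thus `(z, z*)` is monotonically related
to all of `gra A`, and maximality puts it in `gra A`.
-/

open Filter Topology

lemma eq_zero_of_eventually_nonneg_mul_add_sq {α β : ℝ}
    (h : ∀ᶠ t in 𝓝 (0 : ℝ), 0 ≤ t * α + t ^ 2 * β) : α = 0 := by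
  have hmin : IsLocalMin (fun t : ℝ => t * α + t ^ 2 * β) 0 := by
    simpa [IsLocalMin, IsMinFilter] using h
  have hderiv : HasDerivAt (fun t : ℝ => t * α + t ^ 2 * β) α 0 :=
    (((hasDerivAt_id' 0).mul_const α).add ((hasDerivAt_pow 2 0).mul_const β)).congr_deriv (by simp)
  exact hmin.hasDerivAt_eq_zero hderiv

lemma le_and_nonpos_of_forall_pos_add_mul_lt {c s u : ℝ} (h : ∀ r : ℝ, 0 < r → c + r * s < u) :
    c ≤ u ∧ s ≤ 0 := by
  constructor
  · have hlim : Tendsto (fun r : ℝ => c + r * s) (𝓝[>] 0) (𝓝 c) :=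
      tendsto_nhdsWithin_of_tendsto_nhds <|
        (by fun_prop : Continuous fun r : ℝ => c + r * s).tendsto' 0 c (by simp)
    exact le_of_tendsto hlim (eventually_nhdsWithin_of_forall fun r hr => (h r hr).le)
  · by_contra! hs
    have hr := h ((|u - c| + 1) / s) (by positivity)
    rw [div_mul_cancel₀ _ hs.ne'] at hr
    linarith [le_abs_self (u - c)]

section MonotoneOperator

variable {A : X → Set (StrongDual ℝ X)}

lemma IsMaxMonotoneOp.mem_gra_of_monRel (hA : IsMaxMonotoneOp A) {w : X × StrongDual ℝ X}
    (hw : MonRel w (gra A)) : w ∈ gra A := by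
  let B : X → Set (StrongDual ℝ X) := fun x => A x ∪ {xs | (x, xs) = w}
  have hgraB : gra B = gra A ∪ {w} := rfl
  have hmonoB : IsMonotoneOp B := by
    have hsymm : ∀ p : X × StrongDual ℝ X, (p.2 - w.2) (p.1 - w.1) = (w.2 - p.2) (w.1 - p.1) := by
      intro p
      simp only [sub_apply, map_sub]
      ring
    rintro p (hp | hp) q (hq | hq)
    · exact hA.1 p hp q hq
    · obtain rfl : q = w := hq
      exact (hsymm p).symm ▸ hw p hp
    · obtain rfl : p = w := hp
      exact hw q hq
    · obtain rfl : p = w := hp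
      obtain rfl : q = p := hq
      simp
  rw [← hA.2 B hmonoB (hgraB ▸ subset_union_left)]
  exact Or.inr rfl

lemma IsLinearRelation.smul_add_smul_mem (hA : IsLinearRelation A) {p q : X × StrongDual ℝ X}
    (hp : p ∈ gra A) (hq : q ∈ gra A) (a b : ℝ) : a • p + b • q ∈ gra A := by
  obtain ⟨S, hS⟩ := hA
  rw [← hS] at hp hq ⊢
  exact S.add_mem (S.smul_mem a hp) (S.smul_mem b hq)

lemma concaveOn_gra_apply_sub (hmono : IsMonotoneOp A) (hlin : IsLinearRelation A) (z : X) :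
    ConcaveOn ℝ (gra A) fun p => p.2 (z - p.1) := by
  refine ⟨fun p hp q hq a b _ _ _ => hlin.smul_add_smul_mem hp hq a b, ?_⟩
  intro p hp q hq a b ha hb hab
  obtain rfl : b = 1 - a := by linarith
  -- the defect from linearity is `a b ⟨p.1 - q.1, p.2 - q.2⟩ ≥ 0`
  have hdefect := mul_nonneg (mul_nonneg ha hb) (hmono p hp q hq)
  simp only [Prod.fst_add, Prod.smul_fst, Prod.snd_add, Prod.smul_snd,
    add_apply, FunLike.coe_smul, Pi.smul_apply,
    sub_apply, map_add, map_smul, map_sub, smul_eq_mul] at hdefect ⊢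
  linear_combination hdefect

lemma monRel_inv_smul_of_le {z : X} {g : StrongDual ℝ X} {s u : ℝ} (hs : s < 0) (hz : g z ≤ u)
    (hgra : ∀ p ∈ gra A, u ≤ g p.1 + p.2 (z - p.1) * s) :
    MonRel (z, s⁻¹ • g) (gra A) := by
  intro p hp
  have hprod : 0 ≤ s⁻¹ * (g z - g p.1 - p.2 (z - p.1) * s) :=
    mul_nonneg_of_nonpos_of_nonpos (inv_nonpos.2 hs.le) (by linarith [hgra p hp])
  have hcancel : s⁻¹ * (p.2 (z - p.1) * s) = p.2 (z - p.1) := by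
    rw [mul_comm, mul_inv_cancel_right₀ hs.ne]
  rw [mul_sub, mul_sub, hcancel] at hprod
  simp only [sub_apply, FunLike.coe_smul, Pi.smul_apply,
    map_sub, smul_eq_mul] at hprod ⊢
  linarith

lemma exists_monRel_of_monRel_ball (hmono : IsMonotoneOp A) (hlin : IsLinearRelation A)
    {z : X} {zs : StrongDual ℝ X} (hz : z ∈ closure (domOp A)) {ε : ℝ} (hε : 0 < ε)
    (h : MonRel (z, zs) (gra A ∩ Metric.ball z ε ×ˢ univ)) :
    ∃ V : StrongDual ℝ X, MonRel (z, V) (gra A) := by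
  let L : X × ℝ →L[ℝ] ℝ := zs.comp (ContinuousLinearMap.fst ℝ X ℝ) + ContinuousLinearMap.snd ℝ X ℝ
  let U : Set (X × ℝ) := Prod.fst ⁻¹' Metric.ball z ε ∩ {v | zs z < L v}
  let C : Set (X × ℝ) := LinearMap.prodMap (LinearMap.fst ℝ X (StrongDual ℝ X)) LinearMap.id ''
    {w | w.1 ∈ gra A ∧ w.2 ≤ w.1.2 (z - w.1.1)}
  have hUopen : IsOpen U :=
    (Metric.isOpen_ball.preimage continuous_fst).inter (isOpen_lt continuous_const L.continuous)
  have hUconv : Convex ℝ U :=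
    ((convex_ball z ε).linear_preimage (LinearMap.fst ℝ X ℝ)).inter
      (convex_halfSpace_gt L.toLinearMap.isLinear _)
  have hCconv : Convex ℝ C :=
    (concaveOn_gra_apply_sub hmono hlin z).convex_hypograph.linear_image _
  have hmemC : ∀ p ∈ gra A, (p.1, p.2 (z - p.1)) ∈ C := fun p hp => ⟨(p, _), ⟨hp, le_rfl⟩, rfl⟩
  have hdisj : Disjoint U C := by
    rw [disjoint_left]
    rintro _ ⟨hball, hL⟩ ⟨⟨p, r⟩, ⟨hp, hr⟩, rfl⟩
    have hrel := h p ⟨hp, hball, trivial⟩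
    simp only [L, add_apply, ContinuousLinearMap.comp_apply,
      ContinuousLinearMap.coe_fst', ContinuousLinearMap.coe_snd', sub_apply,
      map_sub, mem_ofPred_eq, LinearMap.prodMap_apply, LinearMap.fst_apply,
      LinearMap.id_apply] at hL hr hrel
    linarith
  obtain ⟨f, u, hfU, hfC⟩ := geometric_hahn_banach_open hUconv hUopen hCconv hdisj
  have hf : ∀ x r, f (x, r) = f (x, 0) + r * f (0, 1) := fun x r => by
    rw [← smul_eq_mul, ← map_smul, ← map_add]
    simp
  obtain ⟨hzu, hs⟩ := le_and_nonpos_of_forall_pos_add_mul_lt fun r hr =>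
    hf z r ▸ hfU (z, r) ⟨Metric.mem_ball_self hε, by simpa [L] using hr⟩
  -- a point of `dom A` near `z` keeps the separating hyperplane from being vertical
  have hs0 : f (0, 1) ≠ 0 := by
    intro hs0
    obtain ⟨x, ⟨xs, hxs⟩, hx⟩ := Metric.mem_closure_iff.mp hz ε hε
    have hC := hfC _ (hmemC (x, xs) hxs)
    have hU := hfU (x, zs z - zs x + 1) ⟨by simpa [dist_comm] using hx, by simp [L]; linarith⟩
    rw [hf, hs0] at hC hU
    linarith
  exact ⟨_, monRel_inv_smul_of_le (g := f.comp (ContinuousLinearMap.inl ℝ X ℝ))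
    (hs.lt_of_ne hs0) hzu fun p hp => by simpa [← hf] using hfC _ (hmemC p hp)⟩

lemma monRel_of_monRel_nhds (hmono : IsMonotoneOp A) (hlin : IsLinearRelation A)
    {z : X} {V zs : StrongDual ℝ X} (hzV : (z, V) ∈ gra A) {U : Set X} (hU : U ∈ 𝓝 z)
    (h : MonRel (z, zs) (gra A ∩ U ×ˢ univ)) : MonRel (z, zs) (gra A) := by
  intro p hp
  let q : ℝ → X × StrongDual ℝ X := fun t => (1 - t) • (z, V) + t • p
  have hq : ∀ t, (zs - (q t).2) (z - (q t).1)
      = t * (zs - V) (z - p.1) + t ^ 2 * (p.2 - V) (p.1 - z) := fun t => by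
    simp only [q, Prod.fst_add, Prod.smul_fst, Prod.snd_add, Prod.smul_snd,
      add_apply, FunLike.coe_smul, Pi.smul_apply,
      sub_apply, map_add, map_smul, map_sub, smul_eq_mul]
    ring
  have hnear : ∀ᶠ t in 𝓝 (0 : ℝ), (q t).1 ∈ U := by
    have hcont : Continuous fun t => (q t).1 := by fun_prop
    exact hcont.continuousAt.preimage_mem_nhds (by simpa [q] using hU)
  have hα : (zs - V) (z - p.1) = 0 :=
    eq_zero_of_eventually_nonneg_mul_add_sq <| hnear.mono fun t ht =>
      hq t ▸ h (q t) ⟨hlin.smul_add_smul_mem hzV hp _ _, ht, trivial⟩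
  have hsplit : (zs - p.2) (z - p.1) = (zs - V) (z - p.1) + (p.2 - V) (p.1 - z) := by
    simp only [sub_apply, map_sub]
    ring
  rw [hsplit, hα, zero_add]
  exact hmono p hp (z, V) hzV

end MonotoneOperator

theorem exists_graph_point_violating_general
    {X : Type*} [NormedAddCommGroup X] [NormedSpace ℝ X]
    (A : X → Set (StrongDual ℝ X)) (hA : IsMaxMonotoneOp A) (hAlin : IsLinearRelation A)
    (z : X) (zs : StrongDual ℝ X) (hz : z ∈ closure (domOp A)) (hzs : (z, zs) ∉ gra A) :
    ∀ ε : ℝ, 0 < ε → ∃ q ∈ gra A, ‖q.1 - z‖ < ε ∧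
      zs z < q.2 z + zs q.1 - q.2 q.1 := by
  intro ε hε
  by_contra! hcon
  have hloc : MonRel (z, zs) (gra A ∩ Metric.ball z ε ×ˢ univ) := by
    rintro q ⟨hq, hball, -⟩
    have hle := hcon q hq (by simpa [dist_eq_norm] using hball)
    simp only [sub_apply, map_sub]
    linarith
  obtain ⟨V, hV⟩ := exists_monRel_of_monRel_ball hA.1 hAlin hz hε hloc
  have hzV : (z, V) ∈ gra A := hA.mem_gra_of_monRel hV
  exact hzs <| hA.mem_gra_of_monRel <|
    monRel_of_monRel_nhds hA.1 hAlin hzV (Metric.ball_mem_nhds z hε) hloc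

/-- If `A` is a maximally monotone linear relation, `z` lies in the norm closure of
`dom A` and `(z, z*) ∉ gra A`, then there are points `(a, a*) ∈ gra A` with `a`
arbitrarily close to `z` such that `⟨z,a*⟩ + ⟨a,z*⟩ − ⟨a,a*⟩ > ⟨z,z*⟩`. -/
theorem exists_graph_point_violating
    {X : Type*} [NormedAddCommGroup X] [NormedSpace ℝ X] [CompleteSpace X]
    (A : X → Set (StrongDual ℝ X)) (hA : IsMaxMonotoneOp A) (hAlin : IsLinearRelation A)
    (z : X) (zs : StrongDual ℝ X) (hz : z ∈ closure (domOp A)) (hzs : (z, zs) ∉ gra A) :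
    ∀ ε : ℝ, 0 < ε → ∃ q ∈ gra A, ‖q.1 - z‖ < ε ∧
      zs z < q.2 z + zs q.1 - q.2 q.1 :=
  exists_graph_point_violating_general A hA hAlin z zs hz hzs
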